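/- For every positive real t, the infimum over m ≥ 0 of p² m - c (√(m(m+1)) - m), where c = 4πφ²/p² > 0, is attained at m = g(|p|/((4π)^{1/4} φ^{1/2})) where g(a) = (1/2)((a^4+1)/√(a^4(a^4+2)) - 1); here φ > 0 and p ≠ 0. -/

import Mathlib

/-!
Since `c a⁴ = p²`, we have `F m = c (b m - √(m(m+1)))` with `b = a⁴ + 1`; put `s = √(b² - 1)`.
The line `m ↦ b m + (b - s)/2` lies above `√(m(m+1))` on `[0, ∞)` and touches it exactly at
`m = (b - s)/(2s) = g(a)`, because the gap between their squares is the perfect square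
`(s m - (b - s)/2)²`. Hence `F ≥ -c (b - s)/2`, with equality only at `g(a)`.
-/

open Real Set

/-- The Bogolubov occupation function. -/
noncomputable def polaronG (a : ℝ) : ℝ :=
  (1 / 2) * ((a ^ 4 + 1) / Real.sqrt (a ^ 4 * (a ^ 4 + 2)) - 1)

section TangentLine

variable {b s : ℝ}

theorem tangent_sq_sub_mul_add_one_eq_sq (hs : s ^ 2 = b ^ 2 - 1) (m : ℝ) :
    (b * m + (b - s) / 2) ^ 2 - m * (m + 1) = (s * m - (b - s) / 2) ^ 2 := by
  linear_combination -(m ^ 2 + m) * hs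

theorem sqrt_mul_add_one_le_tangent (hs : s ^ 2 = b ^ 2 - 1) (hs0 : 0 ≤ s) (hsb : s ≤ b)
    {m : ℝ} (hm : 0 ≤ m) : √(m * (m + 1)) ≤ b * m + (b - s) / 2 := by
  rw [Real.sqrt_le_left (by nlinarith)]
  nlinarith [tangent_sq_sub_mul_add_one_eq_sq hs m, sq_nonneg (s * m - (b - s) / 2)]

theorem sqrt_mul_add_one_eq_tangent_iff (hs : s ^ 2 = b ^ 2 - 1) (hs0 : 0 ≤ s) (hsb : s ≤ b)
    {m : ℝ} (hm : 0 ≤ m) : √(m * (m + 1)) = b * m + (b - s) / 2 ↔ s * m = (b - s) / 2 := by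
  have hgap := tangent_sq_sub_mul_add_one_eq_sq hs m
  rw [Real.sqrt_eq_iff_eq_sq (by positivity) (by nlinarith)]
  constructor
  · intro h
    exact sub_eq_zero.mp ((pow_eq_zero_iff two_ne_zero).mp (by linarith))
  · intro h
    rw [h, sub_self, zero_pow two_ne_zero] at hgap
    linarith

end TangentLine

/-- For fixed `p ≠ 0` and `φ > 0`, the function
`F(m) = p² m - (4πφ²/p²)(√(m(m+1)) - m)` on `[0,∞)` has the unique minimizer
`m = g(a)` with `a = |p|/((4π)^{1/4} φ^{1/2})`, and minimum value
`-(4πφ²/p²)·(1/2)(a⁴ + 1 - a²√(a⁴+2))`. -/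
theorem stmt_15 (p : EuclideanSpace ℝ (Fin 3)) (hp : p ≠ 0) (φ : ℝ) (hφ : 0 < φ) :
    letI c : ℝ := 4 * Real.pi * φ ^ 2 / ‖p‖ ^ 2
    letI a : ℝ := ‖p‖ / ((4 * Real.pi) ^ ((1 : ℝ) / 4) * φ ^ ((1 : ℝ) / 2))
    letI F : ℝ → ℝ := fun m => ‖p‖ ^ 2 * m - c * (Real.sqrt (m * (m + 1)) - m)
    0 ≤ polaronG a ∧
    (∀ m : ℝ, 0 ≤ m → F (polaronG a) ≤ F m) ∧
    (∀ m : ℝ, 0 ≤ m → F m = F (polaronG a) → m = polaronG a) ∧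
    F (polaronG a) = -c * ((1 / 2) * (a ^ 4 + 1 - a ^ 2 * Real.sqrt (a ^ 4 + 2))) := by
  set c : ℝ := 4 * π * φ ^ 2 / ‖p‖ ^ 2
  set a : ℝ := ‖p‖ / ((4 * π) ^ (1 / 4 : ℝ) * φ ^ (1 / 2 : ℝ))
  set F : ℝ → ℝ := fun m => ‖p‖ ^ 2 * m - c * (√(m * (m + 1)) - m)
  have hP : 0 < ‖p‖ := norm_pos_iff.mpr hp
  have hc : 0 < c := by positivity
  have ha : 0 < a := by positivity
  have hca : c * a ^ 4 = ‖p‖ ^ 2 := by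
    have hden : ((4 * π) ^ (1 / 4 : ℝ) * φ ^ (1 / 2 : ℝ)) ^ 4 = 4 * π * φ ^ 2 := by
      rw [mul_pow, ← rpow_natCast, ← rpow_natCast (φ ^ _), ← rpow_mul (by positivity),
        ← rpow_mul hφ.le]
      norm_num
    simp only [c, a, div_pow, hden]
    field_simp
  set b := a ^ 4 + 1
  set s := a ^ 2 * √(a ^ 4 + 2)
  have hs : s ^ 2 = b ^ 2 - 1 := by rw [mul_pow, sq_sqrt (by positivity)]; ring
  have hs0 : 0 < s := by positivity
  have hsb : s ≤ b := by nlinarith [show 0 < b by positivity]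
  have hg : polaronG a = (b - s) / (2 * s) := by
    have hroot : √(a ^ 4 * (a ^ 4 + 2)) = s := by
      rw [show a ^ 4 * (a ^ 4 + 2) = (a ^ 2) ^ 2 * (a ^ 4 + 2) by ring,
        sqrt_mul (by positivity), sqrt_sq (by positivity)]
    rw [polaronG, hroot]
    field_simp
    rfl
  have hg0 : 0 ≤ polaronG a := by rw [hg]; exact div_nonneg (by linarith) (by positivity)
  have hg_touch : s * polaronG a = (b - s) / 2 := by rw [hg]; field_simp
  have hF : ∀ m, F m = c * (b * m - √(m * (m + 1))) := fun m => by
    simp only [F, b, ← hca]; ring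
  have hmin : F (polaronG a) = -c * ((1 / 2) * (b - s)) := by
    rw [hF, (sqrt_mul_add_one_eq_tangent_iff hs hs0.le hsb hg0).mpr hg_touch]; ring
  refine ⟨hg0, fun m hm => ?_, fun m hm hFm => ?_, hmin⟩
  · rw [hmin, hF]
    nlinarith [sqrt_mul_add_one_le_tangent hs hs0.le hsb hm]
  · rw [hmin, hF] at hFm
    have hfm : b * m - √(m * (m + 1)) = -((b - s) / 2) :=
      mul_left_cancel₀ hc.ne' (by rw [hFm]; ring)
    have htouch : √(m * (m + 1)) = b * m + (b - s) / 2 := by linarith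
    exact mul_left_cancel₀ hs0.ne'
      (((sqrt_mul_add_one_eq_tangent_iff hs hs0.le hsb hm).mp htouch).trans hg_touch.symm)
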